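/- Let s¹ ≥ s² be V-stability conditions of the same characteristic χ on X. Define E := {Z ∈ D(s²) − D(s¹) : s¹_Z = s²_Z + 1}. Then: (i) D(s²) − D(s¹) is the disjoint union of E and E^c := {Z^c : Z ∈ E}; (ii) for any Z₁, Z₂ ∈ D(s²) − D(s¹) without common components with Z₁ ∪ Z₂ ∈ D(s¹), exactly one of Z₁, Z₂ belongs to E; (iii) for any Z₁, Z₂, Z₃ ∈ D(s²) − D(s¹) pairwise without common components with X = Z₁ ∪ Z₂ ∪ Z₃, the number of Zᵢ in E is 1 or 2. In particular, the degeneracy map is order preserving: s¹ ≥ s² implies D(s¹) ≥ D(s²) in the poset of degeneracy subsets. -/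
import Mathlib


open Finset

variable {ι : Type*} [Fintype ι] [DecidableEq ι]

/-- A subcurve `Y` of the curve (modeled by its finite set of irreducible components with a
connectivity predicate `conn`) is *biconnected* if both `Y` and its complement are nonempty
and connected. -/
def BCon (conn : Finset ι → Prop) (Y : Finset ι) : Prop :=
  Y.Nonempty ∧ Yᶜ.Nonempty ∧ conn Y ∧ conn Yᶜ

/-- `Y` is `s`-degenerate (for characteristic `χ`): `s Y + s Yᶜ - χ = 0`. -/
def Degen (s : Finset ι → ℤ) (χ : ℤ) (Y : Finset ι) : Prop :=
  s Y + s Yᶜ = χ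

/-- A V-stability condition of characteristic `χ`. -/
structure IsVStab (conn : Finset ι → Prop) (χ : ℤ) (s : Finset ι → ℤ) : Prop where
  cond1 : ∀ Y : Finset ι, BCon conn Y → s Y + s Yᶜ = χ ∨ s Y + s Yᶜ = χ + 1
  cond2a : ∀ Y₁ Y₂ Y₃ : Finset ι, BCon conn Y₁ → BCon conn Y₂ → BCon conn Y₃ →
    Disjoint Y₁ Y₂ → Disjoint Y₁ Y₃ → Disjoint Y₂ Y₃ → Y₁ ∪ Y₂ ∪ Y₃ = univ →
    Degen s χ Y₁ → Degen s χ Y₂ → Degen s χ Y₃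
  cond2b : ∀ Y₁ Y₂ Y₃ : Finset ι, BCon conn Y₁ → BCon conn Y₂ → BCon conn Y₃ →
    Disjoint Y₁ Y₂ → Disjoint Y₁ Y₃ → Disjoint Y₂ Y₃ → Y₁ ∪ Y₂ ∪ Y₃ = univ →
    (¬ Degen s χ Y₁ ∧ ¬ Degen s χ Y₂ ∧ ¬ Degen s χ Y₃ →
      s Y₁ + s Y₂ + s Y₃ - χ = 1 ∨ s Y₁ + s Y₂ + s Y₃ - χ = 2) ∧
    (((Degen s χ Y₁ ∧ ¬ Degen s χ Y₂ ∧ ¬ Degen s χ Y₃) ∨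
      (¬ Degen s χ Y₁ ∧ Degen s χ Y₂ ∧ ¬ Degen s χ Y₃) ∨
      (¬ Degen s χ Y₁ ∧ ¬ Degen s χ Y₂ ∧ Degen s χ Y₃)) →
      s Y₁ + s Y₂ + s Y₃ - χ = 1) ∧
    (Degen s χ Y₁ ∧ Degen s χ Y₂ ∧ Degen s χ Y₃ → s Y₁ + s Y₂ + s Y₃ - χ = 0)

/-- A degeneracy subset of the curve. -/
def IsDegSet (conn : Finset ι → Prop) (D : Set (Finset ι)) : Prop :=
  (∀ Y ∈ D, BCon conn Y) ∧ (∀ Y ∈ D, Yᶜ ∈ D) ∧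
  (∀ Y₁ ∈ D, ∀ Y₂ ∈ D, Disjoint Y₁ Y₂ → BCon conn (Y₁ ∪ Y₂) → Y₁ ∪ Y₂ ∈ D)

/-- The partial order on degeneracy subsets: `DegGE D₁ D₂` means `D₁ ≥ D₂`. -/
def DegGE (conn : Finset ι → Prop) (D₁ D₂ : Set (Finset ι)) : Prop :=
  D₁ ⊆ D₂ ∧ ∃ E : Set (Finset ι), E ⊆ D₂ \ D₁ ∧
    (∀ Z ∈ D₂ \ D₁, Z ∈ E ↔ Zᶜ ∉ E) ∧
    (∀ Z₁ ∈ D₂ \ D₁, ∀ Z₂ ∈ D₂ \ D₁, Disjoint Z₁ Z₂ → Z₁ ∪ Z₂ ∈ D₁ → (Z₁ ∈ E ↔ Z₂ ∉ E)) ∧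
    (∀ Z₁ ∈ D₂ \ D₁, ∀ Z₂ ∈ D₂ \ D₁, ∀ Z₃ ∈ D₂ \ D₁,
      Disjoint Z₁ Z₂ → Disjoint Z₁ Z₃ → Disjoint Z₂ Z₃ → Z₁ ∪ Z₂ ∪ Z₃ = univ →
      (Z₁ ∈ E ∨ Z₂ ∈ E ∨ Z₃ ∈ E) ∧ ¬ (Z₁ ∈ E ∧ Z₂ ∈ E ∧ Z₃ ∈ E))

/-- The degeneracy set of a V-stability condition. -/
def DegSetOf (conn : Finset ι → Prop) (χ : ℤ) (s : Finset ι → ℤ) : Set (Finset ι) :=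
  {Y | BCon conn Y ∧ Degen s χ Y}

/-- The witness subset `E = {Z ∈ D(s²) − D(s¹) : s¹_Z = s²_Z + 1}`. -/
def Ewitness (conn : Finset ι → Prop) (χ : ℤ) (s₁ s₂ : Finset ι → ℤ) : Set (Finset ι) :=
  {Z | Z ∈ DegSetOf conn χ s₂ \ DegSetOf conn χ s₁ ∧ s₁ Z = s₂ Z + 1}


lemma bcon_compl {conn : Finset ι → Prop} {Y : Finset ι} (h : BCon conn Y) : BCon conn Yᶜ := by
  obtain ⟨h1, h2, h3, h4⟩ := h
  exact ⟨h2, by simpa using h1, h4, by simpa using h3⟩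

lemma diff_facts {conn : Finset ι → Prop} {χ : ℤ} {s₁ s₂ : Finset ι → ℤ}
    (hs1 : IsVStab conn χ s₁) {Z : Finset ι}
    (hZ : Z ∈ DegSetOf conn χ s₂ \ DegSetOf conn χ s₁) :
    BCon conn Z ∧ s₂ Z + s₂ Zᶜ = χ ∧ s₁ Z + s₁ Zᶜ = χ + 1 := by
  obtain ⟨⟨hb, hd⟩, hn⟩ := hZ
  refine ⟨hb, hd, ?_⟩
  rcases hs1.cond1 Z hb with h | h
  · exact absurd ⟨hb, h⟩ hn
  · exact h

lemma degsub {conn : Finset ι → Prop} {χ : ℤ} {s₁ s₂ : Finset ι → ℤ}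
    (hs2 : IsVStab conn χ s₂) (hge : ∀ Y : Finset ι, BCon conn Y → s₂ Y ≤ s₁ Y) :
    DegSetOf conn χ s₁ ⊆ DegSetOf conn χ s₂ := by
  rintro Y ⟨hb, hd⟩
  refine ⟨hb, ?_⟩
  have h1 := hge Y hb
  have h2 := hge Yᶜ (bcon_compl hb)
  have hd' : s₁ Y + s₁ Yᶜ = χ := hd
  rcases hs2.cond1 Y hb with h | h
  · exact h
  · exact absurd h (by omega)

lemma ew_iff {conn : Finset ι → Prop} {χ : ℤ} {s₁ s₂ : Finset ι → ℤ} {Z : Finset ι}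
    (hZ : Z ∈ DegSetOf conn χ s₂ \ DegSetOf conn χ s₁) :
    Z ∈ Ewitness conn χ s₁ s₂ ↔ s₁ Z = s₂ Z + 1 := by
  constructor
  · exact fun h => h.2
  · exact fun h => ⟨hZ, h⟩

/-- For `Z` in the difference set, the "defect" `s₁ Z - s₂ Z` is 0 or 1 and together with the
defect of the complement sums to 1. -/
lemma defect_facts {conn : Finset ι → Prop} {χ : ℤ} {s₁ s₂ : Finset ι → ℤ}
    (hs1 : IsVStab conn χ s₁) (hge : ∀ Y : Finset ι, BCon conn Y → s₂ Y ≤ s₁ Y)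
    {Z : Finset ι} (hZ : Z ∈ DegSetOf conn χ s₂ \ DegSetOf conn χ s₁) :
    s₂ Z ≤ s₁ Z ∧ s₁ Z ≤ s₂ Z + 1 ∧ s₁ Z + s₁ Zᶜ = s₂ Z + s₂ Zᶜ + 1 := by
  obtain ⟨hb, h2, h1⟩ := diff_facts hs1 hZ
  have g1 := hge Z hb
  have g2 := hge Zᶜ (bcon_compl hb)
  exact ⟨g1, by omega, by omega⟩

lemma compl_mem_diff {conn : Finset ι → Prop} {χ : ℤ} {s₁ s₂ : Finset ι → ℤ}
    (hs1 : IsVStab conn χ s₁) {Z : Finset ι}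
    (hZ : Z ∈ DegSetOf conn χ s₂ \ DegSetOf conn χ s₁) :
    Zᶜ ∈ DegSetOf conn χ s₂ \ DegSetOf conn χ s₁ := by
  obtain ⟨hb, h2, h1⟩ := diff_facts hs1 hZ
  refine ⟨⟨bcon_compl hb, ?_⟩, ?_⟩
  · show s₂ Zᶜ + s₂ Zᶜᶜ = χ
    rw [compl_compl]; omega
  · rintro ⟨-, hd⟩
    have hd' : s₁ Zᶜ + s₁ Zᶜᶜ = χ := hd
    rw [compl_compl] at hd'
    omega

/-- For `s¹ ≥ s²`, the subset `E = {Z ∈ D(s²) − D(s¹) : s¹_Z = s²_Z + 1}` witnesses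
`D(s¹) ≥ D(s²)`: the degeneracy map is order preserving. -/
theorem stmt_9 (conn : Finset ι → Prop) (χ : ℤ) (s₁ s₂ : Finset ι → ℤ)
    (hs1 : IsVStab conn χ s₁) (hs2 : IsVStab conn χ s₂)
    (hge : ∀ Y : Finset ι, BCon conn Y → s₂ Y ≤ s₁ Y) :
    (Ewitness conn χ s₁ s₂ ⊆ DegSetOf conn χ s₂ \ DegSetOf conn χ s₁) ∧
    (∀ Z ∈ DegSetOf conn χ s₂ \ DegSetOf conn χ s₁,
      Z ∈ Ewitness conn χ s₁ s₂ ↔ Zᶜ ∉ Ewitness conn χ s₁ s₂) ∧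
    (∀ Z₁ ∈ DegSetOf conn χ s₂ \ DegSetOf conn χ s₁,
      ∀ Z₂ ∈ DegSetOf conn χ s₂ \ DegSetOf conn χ s₁,
      Disjoint Z₁ Z₂ → Z₁ ∪ Z₂ ∈ DegSetOf conn χ s₁ →
      (Z₁ ∈ Ewitness conn χ s₁ s₂ ↔ Z₂ ∉ Ewitness conn χ s₁ s₂)) ∧
    (∀ Z₁ ∈ DegSetOf conn χ s₂ \ DegSetOf conn χ s₁,
      ∀ Z₂ ∈ DegSetOf conn χ s₂ \ DegSetOf conn χ s₁,
      ∀ Z₃ ∈ DegSetOf conn χ s₂ \ DegSetOf conn χ s₁,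
      Disjoint Z₁ Z₂ → Disjoint Z₁ Z₃ → Disjoint Z₂ Z₃ → Z₁ ∪ Z₂ ∪ Z₃ = univ →
      (Z₁ ∈ Ewitness conn χ s₁ s₂ ∨ Z₂ ∈ Ewitness conn χ s₁ s₂ ∨
        Z₃ ∈ Ewitness conn χ s₁ s₂) ∧
      ¬ (Z₁ ∈ Ewitness conn χ s₁ s₂ ∧ Z₂ ∈ Ewitness conn χ s₁ s₂ ∧
        Z₃ ∈ Ewitness conn χ s₁ s₂)) ∧
    DegGE conn (DegSetOf conn χ s₁) (DegSetOf conn χ s₂) := by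
  have hsub := degsub hs2 hge
  -- part (ii): the pairwise condition
  have part2 : ∀ Z₁ ∈ DegSetOf conn χ s₂ \ DegSetOf conn χ s₁,
      ∀ Z₂ ∈ DegSetOf conn χ s₂ \ DegSetOf conn χ s₁,
      Disjoint Z₁ Z₂ → Z₁ ∪ Z₂ ∈ DegSetOf conn χ s₁ →
      (Z₁ ∈ Ewitness conn χ s₁ s₂ ↔ Z₂ ∉ Ewitness conn χ s₁ s₂) := by
    intro Z₁ h1 Z₂ h2 hdis hU
    obtain ⟨hb1, e21, e11⟩ := diff_facts hs1 h1
    obtain ⟨hb2, e22, e12⟩ := diff_facts hs1 h2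
    obtain ⟨-, hdU2⟩ := hsub hU
    obtain ⟨hbU, hdU⟩ := hU
    set Z₃ := (Z₁ ∪ Z₂)ᶜ with hZ₃
    have hb3 : BCon conn Z₃ := bcon_compl hbU
    have hd13 : Disjoint Z₁ Z₃ := disjoint_compl_right.mono_left subset_union_left
    have hd23 : Disjoint Z₂ Z₃ := disjoint_compl_right.mono_left subset_union_right
    have huniv : Z₁ ∪ Z₂ ∪ Z₃ = univ := union_compl _
    have hdeg13 : Degen s₁ χ Z₃ := by
      show s₁ Z₃ + s₁ Z₃ᶜ = χ
      rw [hZ₃, compl_compl]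
      have : s₁ (Z₁ ∪ Z₂) + s₁ (Z₁ ∪ Z₂)ᶜ = χ := hdU
      omega
    have hdeg23 : Degen s₂ χ Z₃ := by
      show s₂ Z₃ + s₂ Z₃ᶜ = χ
      rw [hZ₃, compl_compl]
      have : s₂ (Z₁ ∪ Z₂) + s₂ (Z₁ ∪ Z₂)ᶜ = χ := hdU2
      omega
    have hnd1 : ¬ Degen s₁ χ Z₁ := fun h => h1.2 ⟨hb1, h⟩
    have hnd2 : ¬ Degen s₁ χ Z₂ := fun h => h2.2 ⟨hb2, h⟩
    have hsum1 : s₁ Z₁ + s₁ Z₂ + s₁ Z₃ - χ = 1 :=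
      (hs1.cond2b Z₁ Z₂ Z₃ hb1 hb2 hb3 hdis hd13 hd23 huniv).2.1
        (Or.inr (Or.inr ⟨hnd1, hnd2, hdeg13⟩))
    have hsum2 : s₂ Z₁ + s₂ Z₂ + s₂ Z₃ - χ = 0 :=
      (hs2.cond2b Z₁ Z₂ Z₃ hb1 hb2 hb3 hdis hd13 hd23 huniv).2.2
        ⟨h1.1.2, h2.1.2, hdeg23⟩
    -- s₁ Z₃ = s₂ Z₃
    have he3 : s₁ Z₃ = s₂ Z₃ := by
      have g1 := hge Z₃ hb3
      have g2 := hge Z₃ᶜ (bcon_compl hb3)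
      have hdeg13' : s₁ Z₃ + s₁ Z₃ᶜ = χ := hdeg13
      have hdeg23' : s₂ Z₃ + s₂ Z₃ᶜ = χ := hdeg23
      omega
    obtain ⟨g1a, g1b, -⟩ := defect_facts hs1 hge h1
    obtain ⟨g2a, g2b, -⟩ := defect_facts hs1 hge h2
    rw [ew_iff h1, ew_iff h2]
    omega
  have part1 : ∀ Z ∈ DegSetOf conn χ s₂ \ DegSetOf conn χ s₁,
      Z ∈ Ewitness conn χ s₁ s₂ ↔ Zᶜ ∉ Ewitness conn χ s₁ s₂ := by
    intro Z hZ
    obtain ⟨g1, g2, g3⟩ := defect_facts hs1 hge hZ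
    obtain ⟨g1', g2', -⟩ := defect_facts hs1 hge (compl_mem_diff hs1 hZ)
    rw [ew_iff hZ, ew_iff (compl_mem_diff hs1 hZ)]
    omega
  have part3 : ∀ Z₁ ∈ DegSetOf conn χ s₂ \ DegSetOf conn χ s₁,
      ∀ Z₂ ∈ DegSetOf conn χ s₂ \ DegSetOf conn χ s₁,
      ∀ Z₃ ∈ DegSetOf conn χ s₂ \ DegSetOf conn χ s₁,
      Disjoint Z₁ Z₂ → Disjoint Z₁ Z₃ → Disjoint Z₂ Z₃ → Z₁ ∪ Z₂ ∪ Z₃ = univ →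
      (Z₁ ∈ Ewitness conn χ s₁ s₂ ∨ Z₂ ∈ Ewitness conn χ s₁ s₂ ∨
        Z₃ ∈ Ewitness conn χ s₁ s₂) ∧
      ¬ (Z₁ ∈ Ewitness conn χ s₁ s₂ ∧ Z₂ ∈ Ewitness conn χ s₁ s₂ ∧
        Z₃ ∈ Ewitness conn χ s₁ s₂) := by
    intro Z₁ h1 Z₂ h2 Z₃ h3 hd12 hd13 hd23 huniv
    obtain ⟨hb1, -, -⟩ := diff_facts hs1 h1
    obtain ⟨hb2, -, -⟩ := diff_facts hs1 h2
    obtain ⟨hb3, -, -⟩ := diff_facts hs1 h3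
    have hnd1 : ¬ Degen s₁ χ Z₁ := fun h => h1.2 ⟨hb1, h⟩
    have hnd2 : ¬ Degen s₁ χ Z₂ := fun h => h2.2 ⟨hb2, h⟩
    have hnd3 : ¬ Degen s₁ χ Z₃ := fun h => h3.2 ⟨hb3, h⟩
    have hsum1 := (hs1.cond2b Z₁ Z₂ Z₃ hb1 hb2 hb3 hd12 hd13 hd23 huniv).1
      ⟨hnd1, hnd2, hnd3⟩
    have hsum2 : s₂ Z₁ + s₂ Z₂ + s₂ Z₃ - χ = 0 :=
      (hs2.cond2b Z₁ Z₂ Z₃ hb1 hb2 hb3 hd12 hd13 hd23 huniv).2.2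
        ⟨h1.1.2, h2.1.2, h3.1.2⟩
    obtain ⟨g1a, g1b, -⟩ := defect_facts hs1 hge h1
    obtain ⟨g2a, g2b, -⟩ := defect_facts hs1 hge h2
    obtain ⟨g3a, g3b, -⟩ := defect_facts hs1 hge h3
    rw [ew_iff h1, ew_iff h2, ew_iff h3]
    omega
  refine ⟨fun Z hZ => hZ.1, part1, part2, part3, hsub, Ewitness conn χ s₁ s₂,
    fun Z hZ => hZ.1, part1, part2, part3⟩
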